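/- Let G be a finite group acting by ring automorphisms on a commutative ring A with |G| invertible in A, and let J₁, J₂ ⊆ A be G-invariant ideals with J₁ + J₂ = A. Then (J₁ ∩ A^G) + (J₂ ∩ A^G) = A^G. In particular, disjoint closed G-invariant subschemes of Spec A have disjoint images in Spec A^G. -/

import Mathlib

/-!
Averaging over `G`, `x ↦ |G|⁻¹ • ∑ g • x`, is an additive map from `A` onto `A^G` that fixes `1` and
sends every `G`-stable ideal into itself. Applying it to `1 = x + y` with `x ∈ J₁`, `y ∈ J₂` writes
`1` as a sum of invariants from `J₁` and `J₂`.
-/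

/-- The subring of `G`-invariant elements of `A`. -/
def fixedSubring (G A : Type*) [Monoid G] [CommRing A] [MulSemiringAction G A] : Subring A where
  carrier := {a | ∀ g : G, g • a = a}
  mul_mem' := by intro a b ha hb g; rw [smul_mul', ha g, hb g]
  one_mem' := fun g => smul_one g
  add_mem' := by intro a b ha hb g; rw [smul_add, ha g, hb g]
  zero_mem' := fun g => smul_zero g
  neg_mem' := by intro a ha g; rw [smul_neg, ha g]

section Reynolds

variable (G : Type*) {A : Type*}

lemma smul_invOf_natCast [Monoid G] [Semiring A] [MulSemiringAction G A] (g : G) (n : ℕ)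
    [Invertible (n : A)] : g • ⅟(n : A) = ⅟(n : A) := by
  have hn : g • (n : A) = n := map_natCast (MulSemiringAction.toRingHom G A g) n
  refine (invOf_eq_right_inv ?_).symm
  calc (n : A) * g • ⅟(n : A) = g • ((n : A) * ⅟(n : A)) := by rw [smul_mul', hn]
    _ = 1 := by rw [mul_invOf_self, smul_one]

lemma smul_sum_smul [Group G] [Fintype G] [AddCommMonoid A] [DistribMulAction G A] (g : G) (x : A) :
    g • ∑ h : G, h • x = ∑ h : G, h • x := by
  rw [Finset.smul_sum]
  exact Fintype.sum_equiv (Equiv.mulLeft g) _ _ fun h => (mul_smul g h x).symm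

variable [Group G] [Fintype G] [CommRing A] [MulSemiringAction G A]
  [Invertible (Fintype.card G : A)]

noncomputable def reynolds : A →+ fixedSubring G A where
  toFun x := ⟨⅟(Fintype.card G : A) * ∑ g : G, g • x, fun g => by
    rw [smul_mul', smul_invOf_natCast, smul_sum_smul]⟩
  map_zero' := by ext; simp
  map_add' x y := by ext; simp [smul_add, Finset.sum_add_distrib, mul_add]

lemma reynolds_one : reynolds G (1 : A) = 1 := by
  ext; simp [reynolds]

lemma reynolds_mem_comap (J : Ideal A) (hJ : ∀ g : G, ∀ a ∈ J, g • a ∈ J) {x : A} (hx : x ∈ J) :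
    reynolds G x ∈ J.comap (fixedSubring G A).subtype :=
  J.mul_mem_left _ <| J.sum_mem fun g _ => hJ g x hx

end Reynolds

/-- Separation: if `G`-invariant ideals `J₁, J₂` satisfy `J₁ + J₂ = A`, then
`(J₁ ∩ A^G) + (J₂ ∩ A^G) = A^G`. -/
theorem contraction_comaximal (G A : Type*) [Group G] [Fintype G] [CommRing A]
    [MulSemiringAction G A] [Invertible ((Fintype.card G : A))]
    (J₁ J₂ : Ideal A) (hJ₁ : ∀ (g : G), ∀ a ∈ J₁, g • a ∈ J₁)
    (hJ₂ : ∀ (g : G), ∀ a ∈ J₂, g • a ∈ J₂) (h : J₁ ⊔ J₂ = ⊤) :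
    J₁.comap (fixedSubring G A).subtype ⊔ J₂.comap (fixedSubring G A).subtype = ⊤ := by
  obtain ⟨x, hx, y, hy, hxy⟩ := Submodule.mem_sup.mp (h ▸ Submodule.mem_top : (1 : A) ∈ J₁ ⊔ J₂)
  rw [Ideal.eq_top_iff_one, ← reynolds_one G, ← hxy, map_add]
  exact Submodule.add_mem_sup (reynolds_mem_comap G J₁ hJ₁ hx) (reynolds_mem_comap G J₂ hJ₂ hy)
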